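/- arXiv:2102.07698 — 6 statements merged into one kernel-verified Lean document; each statement's English description precedes it below -/
import Mathlib

section
/- Let f : ℝ^p → ℝ be differentiable with L-Lipschitz gradient (‖∇f(θ) − ∇f(θ')‖ ≤ L‖θ − θ'‖ for all θ, θ'). Let θ ∈ ℝ^p, let g ∈ ℝ^p be an approximate gradient with error e = g − ∇f(θ), let η > 0, and set θ' = θ − ηg. If ‖∇f(θ)‖ ≤ G, then (η − η²L)·‖∇f(θ)‖² ≤ f(θ) − f(θ') + ηG‖e‖ + η²L‖e‖². -/
/-! By the descent lemma `f (θ + v) ≤ f θ + ⟪∇f θ, v⟫ + L/2 ‖v‖²` (compare `t ↦ f (θ + t • v)`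
with its quadratic upper model on `[0, 1]`), applied to `v = -η • g`, it suffices to bound
`-η ⟪∇f θ, g⟫ + L/2 η² ‖g‖²`. Writing `g = ∇f θ + e`, the cross term `⟪∇f θ, e⟫` is
controlled by Cauchy–Schwarz and `‖∇f θ‖ ≤ G`, and `‖g‖² ≤ 2 ‖∇f θ‖² + 2 ‖e‖²`. -/

open RealInnerProductSpace

section Descent

variable {E : Type*} [NormedAddCommGroup E] [InnerProductSpace ℝ E] [CompleteSpace E]
  {f : E → ℝ} {L : ℝ}

theorem hasDerivAt_comp_add_smul (hf : Differentiable ℝ f) (x v : E) (t : ℝ) :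
    HasDerivAt (fun s : ℝ => f (x + s • v)) ⟪gradient f (x + t • v), v⟫ t := by
  have hline : HasDerivAt (fun s : ℝ => x + s • v) v t := by
    simpa using ((hasDerivAt_id t).smul_const v).const_add x
  rw [inner_gradient_left]
  exact (hf (x + t • v)).hasFDerivAt.comp_hasDerivAt t hline

theorem inner_gradient_add_smul_le
    (hLip : ∀ a b, ‖gradient f a - gradient f b‖ ≤ L * ‖a - b‖) (x v : E) {t : ℝ} (ht : 0 ≤ t) :
    ⟪gradient f (x + t • v), v⟫ ≤ ⟪gradient f x, v⟫ + L * t * ‖v‖ ^ 2 := by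
  have h : ⟪gradient f (x + t • v) - gradient f x, v⟫ ≤ L * t * ‖v‖ ^ 2 :=
    calc ⟪gradient f (x + t • v) - gradient f x, v⟫
        ≤ ‖gradient f (x + t • v) - gradient f x‖ * ‖v‖ := real_inner_le_norm _ _
      _ ≤ L * ‖x + t • v - x‖ * ‖v‖ := by gcongr; exact hLip _ _
      _ = L * t * ‖v‖ ^ 2 := by
        simp only [add_sub_cancel_left, norm_smul, Real.norm_eq_abs, abs_of_nonneg ht]
        ring
  rw [inner_sub_left] at h
  linarith

theorem le_add_inner_gradient_add_sq (hf : Differentiable ℝ f)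
    (hLip : ∀ a b, ‖gradient f a - gradient f b‖ ≤ L * ‖a - b‖) (x v : E) :
    f (x + v) ≤ f x + ⟪gradient f x, v⟫ + L / 2 * ‖v‖ ^ 2 := by
  let B : ℝ → ℝ := fun t => f x + t * ⟪gradient f x, v⟫ + L / 2 * t ^ 2 * ‖v‖ ^ 2
  have hB : ∀ t, HasDerivAt B (⟪gradient f x, v⟫ + L * t * ‖v‖ ^ 2) t := by
    intro t
    refine ((((hasDerivAt_id t).mul_const ⟪gradient f x, v⟫).const_add (f x)).add
      (((hasDerivAt_pow 2 t).const_mul (L / 2)).mul_const (‖v‖ ^ 2))).congr_deriv ?_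
    ring
  have hcomp := hasDerivAt_comp_add_smul hf x v
  have key := image_le_of_deriv_right_le_deriv_boundary (a := 0) (b := 1)
    (fun t _ => (hcomp t).continuousAt.continuousWithinAt)
    (fun t _ => (hcomp t).hasDerivWithinAt) (B := B) (by simp [B])
    (fun t _ => (hB t).continuousAt.continuousWithinAt) (fun t _ => (hB t).hasDerivWithinAt)
    (fun t ht => inner_gradient_add_smul_le hLip x v ht.1) ⟨zero_le_one, le_rfl⟩
  simpa [B] using key

end Descent

/-- One-step descent inequality for gradient descent with an inexact gradient: if `f` has
`L`-Lipschitz gradient, `‖∇f(θ)‖ ≤ G`, and `θ' = θ − ηg` with gradient error `e = g − ∇f(θ)`,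
then `(η − η²L)‖∇f(θ)‖² ≤ f(θ) − f(θ') + ηG‖e‖ + η²L‖e‖²`. -/
theorem inexact_gradient_descent_step {p : ℕ}
    (f : EuclideanSpace ℝ (Fin p) → ℝ) (L : ℝ) (hL : 0 ≤ L)
    (hf : Differentiable ℝ f)
    (hLip : ∀ a b, ‖gradient f a - gradient f b‖ ≤ L * ‖a - b‖)
    (θ g : EuclideanSpace ℝ (Fin p)) (η : ℝ) (hη : 0 < η)
    (G : ℝ) (hG : ‖gradient f θ‖ ≤ G) :
    (η - η ^ 2 * L) * ‖gradient f θ‖ ^ 2 ≤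
      f θ - f (θ - η • g) + η * G * ‖g - gradient f θ‖
        + η ^ 2 * L * ‖g - gradient f θ‖ ^ 2 := by
  set d := gradient f θ
  set e := g - d
  have hg : g = d + e := by simp [e]
  have descent : f (θ - η • g) ≤ f θ - η * ⟪d, g⟫ + L / 2 * (η ^ 2 * ‖g‖ ^ 2) := by
    simpa [-inner_gradient_left, sub_eq_add_neg, ← neg_smul, real_inner_smul_right, norm_smul,
      mul_pow, abs_of_pos hη] using le_add_inner_gradient_add_sq hf hLip θ (-η • g)
  have inner_g : ⟪d, g⟫ = ‖d‖ ^ 2 + ⟪d, e⟫ := by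
    rw [hg, inner_add_right, real_inner_self_eq_norm_sq]
  have cross : -⟪d, e⟫ ≤ G * ‖e‖ :=
    (neg_le_abs _).trans ((abs_real_inner_le_norm d e).trans (by gcongr))
  have norm_g : ‖g‖ ^ 2 ≤ 2 * (‖d‖ ^ 2 + ‖e‖ ^ 2) :=
    (pow_le_pow_left₀ (norm_nonneg _) (hg ▸ norm_add_le d e) 2).trans add_sq_le
  nlinarith [mul_le_mul_of_nonneg_left cross hη.le,
    mul_le_mul_of_nonneg_left norm_g (mul_nonneg hL (sq_nonneg η))]
end

section
/- Let f : ℝ^p → ℝ be differentiable with L-Lipschitz gradient, and suppose |f(θ)| ≤ ℓ_max for all θ. Fix η with 0 < η < 1/L. Let (θ_t)_{t≥1} be generated by θ_{t+1} = θ_t − η g_t where g_t ∈ ℝ^p, set e_t = g_t − ∇f(θ_t), and assume ‖∇f(θ_t)‖ ≤ G for all 1 ≤ t ≤ T. Then T · min_{1 ≤ t ≤ T} ‖∇f(θ_t)‖² ≤ (f(θ_1) − f(θ_{T+1}) + ηG·Σ_{t=1}^T ‖e_t‖ + η²L·Σ_{t=1}^T ‖e_t‖²)/(η − Lη²), and in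 particular min_{1 ≤ t ≤ T} ‖∇f(θ_t)‖² ≤ (2ℓ_max + ηG·Σ_{t=1}^T ‖e_t‖ + η²L·Σ_{t=1}^T ‖e_t‖²)/(T(η − Lη²)). -/
open Real Finset

/-!
The mean value inequality with the `L`-Lipschitz gradient gives the descent bound
`f y ≤ f x + ⟪∇f x, y - x⟫ + L ‖y - x‖²`. For a step `y = x - η (∇f x + e)` the cross term
`η (2Lη - 1) ⟪∇f x, e⟫` is at most `η G ‖e‖` because `|2Lη - 1| ≤ 1`, so each step decreases `f`
by at least `(η - Lη²) ‖∇f x‖²` up to the error terms. Summing telescopes the values of `f`, and the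
minimum of `‖∇f(θ_t)‖²` is at most their average.
-/

section InexactGradientStep

variable {E : Type*} [NormedAddCommGroup E] [InnerProductSpace ℝ E] {L : ℝ}

theorem neg_mul_inner_add_mul_norm_smul_sq_le {d e : E} {η G : ℝ} (hη : 0 ≤ η)
    (hLη₀ : 0 ≤ L * η) (hLη₁ : L * η ≤ 1) (hd : ‖d‖ ≤ G) :
    -η * inner ℝ d (d + e) + L * ‖η • (d + e)‖ ^ 2 ≤
      -(η - L * η ^ 2) * ‖d‖ ^ 2 + η * G * ‖e‖ + η ^ 2 * L * ‖e‖ ^ 2 := by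
  have hexpand : -η * inner ℝ d (d + e) + L * ‖η • (d + e)‖ ^ 2 =
      -(η - L * η ^ 2) * ‖d‖ ^ 2 + η * (2 * (L * η) - 1) * inner ℝ d e
        + η ^ 2 * L * ‖e‖ ^ 2 := by
    rw [norm_smul, mul_pow, norm_add_sq_real, inner_add_right, real_inner_self_eq_norm_sq,
      Real.norm_eq_abs, sq_abs]
    ring
  have hcross : (2 * (L * η) - 1) * inner ℝ d e ≤ G * ‖e‖ :=
    calc (2 * (L * η) - 1) * inner ℝ d e ≤ |2 * (L * η) - 1| * |inner ℝ d e| :=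
          (le_abs_self _).trans (abs_mul _ _).le
      _ ≤ 1 * (‖d‖ * ‖e‖) :=
          mul_le_mul (abs_le.mpr ⟨by linarith, by linarith⟩) (abs_real_inner_le_norm d e)
            (abs_nonneg _) zero_le_one
      _ ≤ G * ‖e‖ := by rw [one_mul]; exact mul_le_mul_of_nonneg_right hd (norm_nonneg e)
  rw [hexpand]
  nlinarith [mul_le_mul_of_nonneg_left hcross hη]

variable [CompleteSpace E] {f : E → ℝ}

open InnerProductSpace in
theorem le_add_inner_gradient_add_mul_norm_sq (hL : 0 ≤ L) (hf : Differentiable ℝ f)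
    (hLip : ∀ a b, ‖gradient f a - gradient f b‖ ≤ L * ‖a - b‖) (x y : E) :
    f y ≤ f x + inner ℝ (gradient f x) (y - x) + L * ‖y - x‖ ^ 2 := by
  have hmvt : ‖f y - f x - toDual ℝ E (gradient f x) (y - x)‖ ≤ L * ‖y - x‖ * ‖y - x‖ := by
    refine Convex.norm_image_sub_le_of_norm_fderiv_le' (fun z _ => hf.differentiableAt)
      (fun z hz => ?_) (convex_closedBall x ‖y - x‖) (Metric.mem_closedBall_self (norm_nonneg _))
      (by simp [dist_eq_norm])
    rw [← toDual_gradient, ← map_sub, LinearIsometryEquiv.norm_map]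
    exact (hLip z x).trans
      (mul_le_mul_of_nonneg_left (by simpa [dist_eq_norm] using hz) hL)
  rw [toDual_apply_apply, Real.norm_eq_abs] at hmvt
  nlinarith [le_abs_self (f y - f x - inner ℝ (gradient f x) (y - x))]

theorem mul_norm_gradient_sq_le_sub_apply_sub_smul (hL : 0 ≤ L) (hf : Differentiable ℝ f)
    (hLip : ∀ a b, ‖gradient f a - gradient f b‖ ≤ L * ‖a - b‖) {η G : ℝ} (hη : 0 ≤ η)
    (hLη : L * η ≤ 1) (x g : E) (hG : ‖gradient f x‖ ≤ G) :
    (η - L * η ^ 2) * ‖gradient f x‖ ^ 2 ≤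
      f x - f (x - η • g) + η * G * ‖g - gradient f x‖ + η ^ 2 * L * ‖g - gradient f x‖ ^ 2 := by
  have hg : g = gradient f x + (g - gradient f x) := by abel
  have hdescent := le_add_inner_gradient_add_mul_norm_sq hL hf hLip x (x - η • g)
  have hstep := neg_mul_inner_add_mul_norm_smul_sq_le (e := g - gradient f x) hη
    (mul_nonneg hL hη) hLη hG
  rw [sub_sub_cancel_left, inner_neg_right, norm_neg, real_inner_smul_right] at hdescent
  rw [← hg] at hstep
  linarith

theorem mul_sum_norm_gradient_sq_le (hL : 0 ≤ L) (hf : Differentiable ℝ f)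
    (hLip : ∀ a b, ‖gradient f a - gradient f b‖ ≤ L * ‖a - b‖) {η G : ℝ} (hη : 0 ≤ η)
    (hLη : L * η ≤ 1) {θ g : ℕ → E} (hstep : ∀ t, θ (t + 1) = θ t - η • g t) {m n : ℕ}
    (hmn : m ≤ n) (hG : ∀ t ∈ Icc m n, ‖gradient f (θ t)‖ ≤ G) :
    (η - L * η ^ 2) * ∑ t ∈ Icc m n, ‖gradient f (θ t)‖ ^ 2 ≤
      f (θ m) - f (θ (n + 1)) + η * G * ∑ t ∈ Icc m n, ‖g t - gradient f (θ t)‖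
        + η ^ 2 * L * ∑ t ∈ Icc m n, ‖g t - gradient f (θ t)‖ ^ 2 := by
  have htelescope : ∑ t ∈ Icc m n, (f (θ t) - f (θ (t + 1))) = f (θ m) - f (θ (n + 1)) := by
    rw [← neg_sub, ← sum_Icc_sub hmn (fun t => f (θ t)), ← sum_neg_distrib]
    simp only [neg_sub]
  rw [← htelescope, mul_sum, mul_sum, mul_sum, ← sum_add_distrib, ← sum_add_distrib]
  refine sum_le_sum fun t ht => ?_
  rw [hstep]
  exact mul_norm_gradient_sq_le_sub_apply_sub_smul hL hf hLip hη hLη _ _ (hG t ht)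

end InexactGradientStep

theorem inexact_gradient_descent_convergence_general {p : ℕ}
    (f : EuclideanSpace ℝ (Fin p) → ℝ) (L ℓmax : ℝ)
    (hf : Differentiable ℝ f)
    (hLip : ∀ a b, ‖gradient f a - gradient f b‖ ≤ L * ‖a - b‖)
    (hbdd : ∀ θ, |f θ| ≤ ℓmax)
    (η : ℝ) (hη0 : 0 < η) (hη1 : η < 1 / L)
    (θ g : ℕ → EuclideanSpace ℝ (Fin p))
    (hstep : ∀ t, θ (t + 1) = θ t - η • g t)
    (T : ℕ) (hT : 1 ≤ T)
    (G : ℝ) (hG : ∀ t, 1 ≤ t → t ≤ T → ‖gradient f (θ t)‖ ≤ G) :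
    (T : ℝ) * ((Finset.Icc 1 T).inf' (Finset.nonempty_Icc.mpr hT)
        (fun t => ‖gradient f (θ t)‖ ^ 2)) ≤
      (f (θ 1) - f (θ (T + 1)) + η * G * ∑ t ∈ Finset.Icc 1 T, ‖g t - gradient f (θ t)‖
          + η ^ 2 * L * ∑ t ∈ Finset.Icc 1 T, ‖g t - gradient f (θ t)‖ ^ 2) /
        (η - L * η ^ 2) ∧
    ((Finset.Icc 1 T).inf' (Finset.nonempty_Icc.mpr hT)
        (fun t => ‖gradient f (θ t)‖ ^ 2)) ≤
      (2 * ℓmax + η * G * ∑ t ∈ Finset.Icc 1 T, ‖g t - gradient f (θ t)‖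
          + η ^ 2 * L * ∑ t ∈ Finset.Icc 1 T, ‖g t - gradient f (θ t)‖ ^ 2) /
        ((T : ℝ) * (η - L * η ^ 2)) := by
  have hL : 0 < L := one_div_pos.mp (hη0.trans hη1)
  have hLη : L * η < 1 := (lt_div_iff₀' hL).mp (by rwa [one_div] at hη1 ⊢)
  have hc : 0 < η - L * η ^ 2 := by nlinarith
  set m := (Icc 1 T).inf' (nonempty_Icc.mpr hT) fun t => ‖gradient f (θ t)‖ ^ 2
  have hmin : (T : ℝ) * m ≤ ∑ t ∈ Icc 1 T, ‖gradient f (θ t)‖ ^ 2 := by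
    simpa using card_nsmul_le_sum (Icc 1 T) _ m fun t ht => inf'_le _ ht
  have hsum := mul_sum_norm_gradient_sq_le hL.le hf hLip hη0.le hLη.le hstep hT
    fun t ht => hG t (mem_Icc.mp ht).1 (mem_Icc.mp ht).2
  have hgap : f (θ 1) - f (θ (T + 1)) ≤ 2 * ℓmax := by
    linarith [(abs_le.mp (hbdd (θ 1))).2, (abs_le.mp (hbdd (θ (T + 1)))).1]
  have hdescent : (T : ℝ) * m * (η - L * η ^ 2) ≤ f (θ 1) - f (θ (T + 1))
      + η * G * ∑ t ∈ Icc 1 T, ‖g t - gradient f (θ t)‖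
      + η ^ 2 * L * ∑ t ∈ Icc 1 T, ‖g t - gradient f (θ t)‖ ^ 2 := by
    nlinarith [mul_le_mul_of_nonneg_left hmin hc.le]
  refine ⟨(le_div_iff₀ hc).mpr hdescent, ?_⟩
  rw [le_div_iff₀ (mul_pos (by exact_mod_cast hT) hc)]
  linarith

/-- Telescoped convergence bound for gradient descent with inexact gradients: if `f` has
`L`-Lipschitz gradient, `|f| ≤ ℓmax`, `0 < η < 1/L`, the iterates satisfy
`θ_{t+1} = θ_t − η g_t` with errors `e_t = g_t − ∇f(θ_t)` and `‖∇f(θ_t)‖ ≤ G` for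
`1 ≤ t ≤ T`, then `T · min_{1≤t≤T} ‖∇f(θ_t)‖²` and `min_{1≤t≤T} ‖∇f(θ_t)‖²` obey the
stated bounds. -/
theorem inexact_gradient_descent_convergence {p : ℕ}
    (f : EuclideanSpace ℝ (Fin p) → ℝ) (L ℓmax : ℝ) (hL : 0 < L)
    (hf : Differentiable ℝ f)
    (hLip : ∀ a b, ‖gradient f a - gradient f b‖ ≤ L * ‖a - b‖)
    (hbdd : ∀ θ, |f θ| ≤ ℓmax)
    (η : ℝ) (hη0 : 0 < η) (hη1 : η < 1 / L)
    (θ g : ℕ → EuclideanSpace ℝ (Fin p))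
    (hstep : ∀ t, θ (t + 1) = θ t - η • g t)
    (T : ℕ) (hT : 1 ≤ T)
    (G : ℝ) (hG : ∀ t, 1 ≤ t → t ≤ T → ‖gradient f (θ t)‖ ≤ G) :
    (T : ℝ) * ((Finset.Icc 1 T).inf' (Finset.nonempty_Icc.mpr hT)
        (fun t => ‖gradient f (θ t)‖ ^ 2)) ≤
      (f (θ 1) - f (θ (T + 1)) + η * G * ∑ t ∈ Finset.Icc 1 T, ‖g t - gradient f (θ t)‖
          + η ^ 2 * L * ∑ t ∈ Finset.Icc 1 T, ‖g t - gradient f (θ t)‖ ^ 2) /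
        (η - L * η ^ 2) ∧
    ((Finset.Icc 1 T).inf' (Finset.nonempty_Icc.mpr hT)
        (fun t => ‖gradient f (θ t)‖ ^ 2)) ≤
      (2 * ℓmax + η * G * ∑ t ∈ Finset.Icc 1 T, ‖g t - gradient f (θ t)‖
          + η ^ 2 * L * ∑ t ∈ Finset.Icc 1 T, ‖g t - gradient f (θ t)‖ ^ 2) /
        ((T : ℝ) * (η - L * η ^ 2)) :=
  inexact_gradient_descent_convergence_general f L ℓmax hf hLip hbdd η hη0 hη1 θ g hstep T hT G hG
end

section
/- Let a₀, a₁ ∈ ℝ with a₁ > a₀ ≥ 0. Define the population repeated-risk-minimization map on [−1, 1] by T(θ) = argmin_{θ' ∈ [−1, 1]} E_{z ~ N(a₁θ + a₀, σ²)}[θ'·z] = argmin_{θ' ∈ [−1, 1]} θ'·(a₁θ + a₀). Then the argmin is unique at θ = 1 and θ = −1, with T(1) = −1 and T(−1) = 1; in particular T has no fixed point in {−1, 1} and the iteration starting from θ₀ = 1 oscillates between 1 and −1 forever. -/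
/-- For the population repeated-risk-minimization map
`T(θ) = argmin_{θ' ∈ [−1,1]} θ'·(a₁θ + a₀)` with `a₁ > a₀ ≥ 0`: the argmin is unique at
`θ = 1` (equal to `−1`) and at `θ = −1` (equal to `1`), and any RRM iteration starting
from `θ₀ = 1` (where each iterate is the unique minimizer for the preceding one)
oscillates between `1` and `−1` forever. -/
theorem rrm_oscillates (a₀ a₁ : ℝ) (ha₀ : 0 ≤ a₀) (ha : a₀ < a₁)
    (θseq : ℕ → ℝ) (h0 : θseq 0 = 1)
    (hstep : ∀ t, θseq (t + 1) ∈ Set.Icc (-1 : ℝ) 1 ∧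
      ∀ θ' ∈ Set.Icc (-1 : ℝ) 1, θ' ≠ θseq (t + 1) →
        θseq (t + 1) * (a₁ * θseq t + a₀) < θ' * (a₁ * θseq t + a₀)) :
    (∀ θ' ∈ Set.Icc (-1 : ℝ) 1, θ' ≠ (-1 : ℝ) →
      (-1) * (a₁ * 1 + a₀) < θ' * (a₁ * 1 + a₀)) ∧
    (∀ θ' ∈ Set.Icc (-1 : ℝ) 1, θ' ≠ (1 : ℝ) →
      1 * (a₁ * (-1) + a₀) < θ' * (a₁ * (-1) + a₀)) ∧
    (∀ t : ℕ, θseq (2 * t) = 1 ∧ θseq (2 * t + 1) = -1) := by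
  have hpos : 0 < a₁ * 1 + a₀ := by nlinarith
  have hneg : a₁ * (-1) + a₀ < 0 := by nlinarith
  refine ⟨?_, ?_, ?_⟩
  · intro θ' hθ' hne
    rcases hθ' with ⟨h1, h2⟩
    rcases lt_or_eq_of_le h1 with h | h
    · nlinarith
    · exact absurd h.symm hne
  · intro θ' hθ' hne
    rcases hθ' with ⟨h1, h2⟩
    rcases lt_or_eq_of_le h2 with h | h
    · nlinarith
    · exact absurd h hne
  · -- key step lemma
    have step1 : ∀ t, θseq t = 1 → θseq (t + 1) = -1 := by
      intro t ht
      by_contra hne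
      have h := (hstep t).2 (-1) ⟨le_refl _, by norm_num⟩ (fun h => hne h.symm)
      rcases (hstep t).1 with ⟨h1, h2⟩
      rw [ht] at h
      nlinarith
    have step2 : ∀ t, θseq t = -1 → θseq (t + 1) = 1 := by
      intro t ht
      by_contra hne
      have h := (hstep t).2 1 ⟨by norm_num, le_refl _⟩ (fun h => hne h.symm)
      rcases (hstep t).1 with ⟨h1, h2⟩
      rw [ht] at h
      nlinarith
    intro t
    induction t with
    | zero => exact ⟨h0, step1 0 h0⟩
    | succ n ih =>
      have h1 : θseq (2 * (n + 1)) = 1 := by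
        have e : 2 * (n + 1) = 2 * n + 1 + 1 := by ring
        rw [e]; exact step2 _ ih.2
      exact ⟨h1, step1 _ h1⟩
end

section
/- Let d ≥ 1, μ₀ ∈ ℝ^d, ε > 0, and let Σ be a positive-definite d×d covariance matrix. For the pricing problem with loss ℓ(z; θ) = −θᵀz and distribution map D(θ) = N(μ₀ − εθ, Σ), the unique performatively stable point, i.e. the unique θ ∈ ℝ^d with E_{z ~ D(θ)}[∇_θ(−θᵀz)] = −E_{z ~ D(θ)}[z] = 0, is θ_STAB = μ₀/ε, and it equals 2·θ_OPT where θ_OPT = μ₀/(2ε) is the unique maximizer over ℝ^d of the performative revenue R(θ) = E_{D(θ)}[θᵀz]. -/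
open MeasureTheory
open scoped RealInnerProductSpace

/-- Performative pricing, stable vs. optimal points: for loss `ℓ(z;θ) = −θᵀz` and
`D(θ) = N(μ₀ − εθ, Σ)` (formalized as any family of probability measures with mean
`μ₀ − εθ`, as is the case for the Gaussian with positive-definite covariance `Σ`),
the unique performatively stable point (where `E_{D(θ)}[z] = 0`) is `θ_STAB = μ₀/ε`,
which equals `2·θ_OPT`, where `θ_OPT = μ₀/(2ε)` is the unique maximizer of the
performative revenue `R(θ) = E_{D(θ)}[θᵀz]` over `ℝ^d`. -/
theorem pricing_stable_is_twice_opt (d : ℕ) (hd : 1 ≤ d)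
    (μ₀ : EuclideanSpace ℝ (Fin d)) (ε : ℝ) (hε : 0 < ε)
    (Sig : Matrix (Fin d) (Fin d) ℝ) (hSig : Sig.PosDef)
    (D : EuclideanSpace ℝ (Fin d) → Measure (EuclideanSpace ℝ (Fin d)))
    (hprob : ∀ θ, IsProbabilityMeasure (D θ))
    (hint : ∀ θ, Integrable (fun z => z) (D θ))
    (hmean : ∀ θ, (∫ z, z ∂(D θ)) = μ₀ - ε • θ) :
    (∀ θ : EuclideanSpace ℝ (Fin d), (∫ z, z ∂(D θ)) = 0 ↔ θ = ε⁻¹ • μ₀) ∧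
    (ε⁻¹ • μ₀ = (2 : ℝ) • ((2 * ε)⁻¹ • μ₀)) ∧
    (∀ θ : EuclideanSpace ℝ (Fin d), θ ≠ (2 * ε)⁻¹ • μ₀ →
      (∫ z, ⟪θ, z⟫ ∂(D θ)) <
        ∫ z, ⟪(2 * ε)⁻¹ • μ₀, z⟫ ∂(D ((2 * ε)⁻¹ • μ₀))) := by
  have hε' : ε ≠ 0 := ne_of_gt hε
  refine ⟨?_, ?_, ?_⟩
  · intro θ
    rw [hmean θ, sub_eq_zero]
    constructor
    · intro h
      rw [h, smul_smul, inv_mul_cancel₀ hε', one_smul]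
    · intro h
      rw [h, smul_smul, mul_inv_cancel₀ hε', one_smul]
  · rw [smul_smul]
    congr 1
    field_simp
  · intro θ hθ
    have key : ∀ η : EuclideanSpace ℝ (Fin d),
        (∫ z, ⟪η, z⟫ ∂(D η)) = ⟪η, μ₀⟫ - ε * ⟪η, η⟫ := by
      intro η
      have := integral_inner (𝕜 := ℝ) (hint η) η
      rw [this, hmean η, inner_sub_right, inner_smul_right]
    rw [key, key]
    set t : EuclideanSpace ℝ (Fin d) := (2 * ε)⁻¹ • μ₀ with ht
    have hμ : μ₀ = (2 * ε) • t := by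
      rw [ht, smul_smul, mul_inv_cancel₀ (by positivity), one_smul]
    have hne : (0:ℝ) < ⟪θ - t, θ - t⟫ :=
      lt_of_le_of_ne real_inner_self_nonneg
        (Ne.symm (inner_self_ne_zero.mpr (sub_ne_zero.mpr hθ)))
    have expand : ⟪θ - t, θ - t⟫ = ⟪θ, θ⟫ - 2 * ⟪θ, t⟫ + ⟪t, t⟫ := by
      rw [inner_sub_left, inner_sub_right, inner_sub_right, real_inner_comm t θ]
      ring
    rw [hμ]
    simp only [inner_smul_right]
    nlinarith [mul_pos hε hne, expand]
end

section
/- Let f : ℝ → ℝ be twice differentiable with |f''(x)| ≤ M for all x. Let x ∈ ℝ and x₁, …, x_H ∈ ℝ with |x_i − x| ≤ B for all i and with not all x_i equal to x. Then the least-squares finite-difference slope estimate α* = (Σ_{i=1}^H (f(x_i) − f(x))(x_i − x)) / (Σ_{i=1}^H (x_i − x)²) satisfies |α* − f'(x)| ≤ MB/2. -/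
open Finset

lemma taylor1_bound (f f' f'' : ℝ → ℝ)
    (hf : ∀ x, HasDerivAt f (f' x) x) (hf' : ∀ x, HasDerivAt f' (f'' x) x)
    (M : ℝ) (hM : ∀ x, |f'' x| ≤ M) (x y : ℝ) :
    |f y - f x - f' x * (y - x)| ≤ M / 2 * (y - x) ^ 2 := by
  have hc : Continuous f' := by
    rw [continuous_iff_continuousAt]; exact fun t => (hf' t).continuousAt
  have hint : f y - f x = ∫ t in x..y, f' t :=
    (intervalIntegral.integral_eq_sub_of_hasDerivAt (fun t _ => hf t)
      (hc.intervalIntegrable x y)).symm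
  have hdiff : f y - f x - f' x * (y - x) = ∫ t in x..y, (f' t - f' x) := by
    rw [intervalIntegral.integral_sub (hc.intervalIntegrable x y)
      (intervalIntegrable_const), intervalIntegral.integral_const, smul_eq_mul, ← hint]
    ring
  have hLip : ∀ t : ℝ, |f' t - f' x| ≤ M * |t - x| := by
    intro t
    have := Convex.norm_image_sub_le_of_norm_hasDerivWithin_le
      (f := f') (f' := f'') (C := M) (s := Set.univ)
      (fun z _ => (hf' z).hasDerivWithinAt)
      (fun z _ => by simpa [Real.norm_eq_abs] using hM z)
      convex_univ (Set.mem_univ x) (Set.mem_univ t)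
    simpa [Real.norm_eq_abs] using this
  have hcsub : Continuous fun t => |f' t - f' x| := (hc.sub continuous_const).abs
  rcases le_total x y with h | h
  · rw [hdiff]
    calc |∫ t in x..y, (f' t - f' x)| ≤ ∫ t in x..y, |f' t - f' x| := by
          simpa [Real.norm_eq_abs] using intervalIntegral.norm_integral_le_integral_norm
            (f := fun t => f' t - f' x) (a := x) (b := y) h
      _ ≤ ∫ t in x..y, M * (t - x) := by
          apply intervalIntegral.integral_mono_on h (hcsub.intervalIntegrable x y)
            ((continuous_const.mul (continuous_id.sub continuous_const)).intervalIntegrable x y)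
          intro t ht
          have := hLip t
          rwa [abs_of_nonneg (by linarith [ht.1] : (0:ℝ) ≤ t - x)] at this
      _ = M / 2 * (y - x) ^ 2 := by
          rw [intervalIntegral.integral_const_mul,
            intervalIntegral.integral_sub intervalIntegral.intervalIntegrable_id
              intervalIntegrable_const,
            integral_id, intervalIntegral.integral_const, smul_eq_mul]
          ring
  · rw [hdiff, intervalIntegral.integral_symm, abs_neg]
    calc |∫ t in y..x, (f' t - f' x)| ≤ ∫ t in y..x, |f' t - f' x| := by
          simpa [Real.norm_eq_abs] using intervalIntegral.norm_integral_le_integral_norm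
            (f := fun t => f' t - f' x) (a := y) (b := x) h
      _ ≤ ∫ t in y..x, M * (x - t) := by
          apply intervalIntegral.integral_mono_on h (hcsub.intervalIntegrable y x)
            ((continuous_const.mul (continuous_const.sub continuous_id)).intervalIntegrable y x)
          intro t ht
          have h1 := hLip t
          rwa [abs_of_nonpos (by linarith [ht.2] : t - x ≤ 0), neg_sub] at h1
      _ = M / 2 * (y - x) ^ 2 := by
          rw [intervalIntegral.integral_const_mul,
            intervalIntegral.integral_sub intervalIntegrable_const
              intervalIntegral.intervalIntegrable_id,
            integral_id, intervalIntegral.integral_const, smul_eq_mul]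
          ring

/-- Bias bound for the multi-point least-squares finite-difference derivative estimator:
if `|f''| ≤ M`, `|x_i − x| ≤ B` for all `i`, and not all `x_i` equal `x`, then the
least-squares slope `α* = (Σ (f(x_i) − f(x))(x_i − x)) / (Σ (x_i − x)²)` satisfies
`|α* − f'(x)| ≤ MB/2`. -/
theorem least_squares_finite_difference_bias (f f' f'' : ℝ → ℝ)
    (hf : ∀ x, HasDerivAt f (f' x) x) (hf' : ∀ x, HasDerivAt f' (f'' x) x)
    (M : ℝ) (hM : ∀ x, |f'' x| ≤ M)
    (x B : ℝ) (H : ℕ) (xs : Fin H → ℝ)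
    (hB : ∀ i, |xs i - x| ≤ B) (hne : ∃ i, xs i ≠ x) :
    |(∑ i, (f (xs i) - f x) * (xs i - x)) / (∑ i, (xs i - x) ^ 2) - f' x| ≤ M * B / 2 := by
  obtain ⟨i₀, hi₀⟩ := hne
  set S : ℝ := ∑ i, (xs i - x) ^ 2 with hS_def
  have hS : 0 < S := by
    apply Finset.sum_pos' (fun i _ => sq_nonneg _)
    exact ⟨i₀, Finset.mem_univ _, by have : xs i₀ - x ≠ 0 := sub_ne_zero.mpr hi₀; positivity⟩
  have hrw : (∑ i, (f (xs i) - f x) * (xs i - x)) / S - f' x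
      = (∑ i, (f (xs i) - f x - f' x * (xs i - x)) * (xs i - x)) / S := by
    rw [eq_div_iff hS.ne', sub_mul, div_mul_cancel₀ _ hS.ne', hS_def, Finset.mul_sum,
      ← Finset.sum_sub_distrib]
    exact Finset.sum_congr rfl (fun i _ => by ring)
  rw [hrw, abs_div, abs_of_pos hS, div_le_iff₀ hS]
  calc |∑ i, (f (xs i) - f x - f' x * (xs i - x)) * (xs i - x)|
      ≤ ∑ i, |(f (xs i) - f x - f' x * (xs i - x)) * (xs i - x)| :=
        Finset.abs_sum_le_sum_abs _ _
    _ ≤ ∑ i, M * B / 2 * (xs i - x) ^ 2 := by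
        apply Finset.sum_le_sum
        intro i _
        rw [abs_mul]
        have h1 := taylor1_bound f f' f'' hf hf' M hM x (xs i)
        have h2 := hB i
        have habs : (0:ℝ) ≤ |xs i - x| := abs_nonneg _
        have hM0 : 0 ≤ M := le_trans (abs_nonneg _) (hM x)
        calc |f (xs i) - f x - f' x * (xs i - x)| * |xs i - x|
            ≤ (M / 2 * (xs i - x) ^ 2) * B := by
              apply mul_le_mul h1 h2 habs (by positivity)
          _ = M * B / 2 * (xs i - x) ^ 2 := by ring
    _ = M * B / 2 * S := by rw [← Finset.mul_sum]
end

section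
/- Let σ > 0 and let p(z; w) = (2πσ²)^{-1/2} exp(−(z − w)²/(2σ²)). Let w, ŵ ∈ ℝ with |ŵ − w| ≤ δ for some δ ≥ 0. Then for every R ≥ δ, the L¹ distance between the two Gaussian densities satisfies ∫_ℝ |p(z; ŵ) − p(z; w)| dz ≤ 2Rδ·e^{-1/2}/(σ·√(2πσ²)) + 2·exp(−(R−δ)²/(2σ²)) + 2·exp(−R²/(2σ²)). -/
/-! Split the line at `|z - w| ≤ R`. On the ball, the mean value theorem in the mean parameter
bounds the integrand by `L |ŵ - w|`, where `L = e^{-1/2} / (σ √(2πσ²))` is the maximum of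
`|∂_w p(z; w)| = p(z; w) |z - w| / σ²`, attained at `|z - w| = σ`. Off the ball, the integrand
is at most `p(z; ŵ) + p(z; w)`, and both tails are controlled by the sub-Gaussian Chernoff bound,
since `|z - w| > R` forces `|z - ŵ| ≥ R - δ`. -/

open Real MeasureTheory

/-- The Gaussian density with mean `w` and variance `σ²`, as a function of `z`. -/
noncomputable def gaussPdf (σ z w : ℝ) : ℝ :=
  (Real.sqrt (2 * Real.pi * σ ^ 2))⁻¹ * Real.exp (-(z - w) ^ 2 / (2 * σ ^ 2))

open ProbabilityTheory NNReal

lemma ProbabilityTheory.hasSubgaussianMGF_sub_gaussianReal (m : ℝ) (v : ℝ≥0) :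
    HasSubgaussianMGF (fun x ↦ x - m) v (gaussianReal m v) := by
  rw [← HasSubgaussianMGF.id_map_iff (by fun_prop), gaussianReal_map_sub_const, sub_self]
  exact ⟨fun t ↦ integrable_exp_mul_gaussianReal t, fun t ↦ by simp [mgf_id_gaussianReal]⟩

lemma ProbabilityTheory.gaussianReal_real_abs_sub_ge_le (m : ℝ) (v : ℝ≥0) {r : ℝ}
    (hr : 0 ≤ r) :
    (gaussianReal m v).real {x | r ≤ |x - m|} ≤ 2 * exp (-r ^ 2 / (2 * v)) := by
  have h := hasSubgaussianMGF_sub_gaussianReal m v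
  have hright := h.measure_ge_le hr
  have hleft := h.neg.measure_ge_le hr
  simp only [Pi.neg_apply, neg_sub] at hleft
  have hsplit : {x | r ≤ |x - m|} = {x | r ≤ x - m} ∪ {x | r ≤ m - x} := by
    ext x
    simp only [Set.mem_ofPred_eq, Set.mem_union, le_abs, neg_sub]
  calc (gaussianReal m v).real {x | r ≤ |x - m|}
      ≤ (gaussianReal m v).real {x | r ≤ x - m}
          + (gaussianReal m v).real {x | r ≤ m - x} := by
        rw [hsplit]; exact measureReal_union_le _ _
    _ ≤ 2 * exp (-r ^ 2 / (2 * v)) := by linarith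

lemma gaussPdf_eq_gaussianPDFReal (σ z m : ℝ) :
    gaussPdf σ z m = gaussianPDFReal m (‖σ‖₊ ^ 2) z := by
  simp [gaussPdf, gaussianPDFReal_def]

lemma gaussPdf_nonneg (σ z m : ℝ) : 0 ≤ gaussPdf σ z m := by
  unfold gaussPdf
  positivity

lemma integrable_gaussPdf (σ m : ℝ) : Integrable (fun z ↦ gaussPdf σ z m) := by
  simpa only [gaussPdf_eq_gaussianPDFReal] using integrable_gaussianPDFReal _ _

lemma setIntegral_gaussPdf_le_of_subset {σ : ℝ} (hσ : σ ≠ 0) {m r : ℝ} (hr : 0 ≤ r)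
    {s : Set ℝ} (hs : s ⊆ {z | r ≤ |z - m|}) :
    ∫ z in s, gaussPdf σ z m ≤ 2 * exp (-r ^ 2 / (2 * σ ^ 2)) := by
  have hv : ‖σ‖₊ ^ 2 ≠ 0 := by simpa using hσ
  calc ∫ z in s, gaussPdf σ z m = (gaussianReal m (‖σ‖₊ ^ 2)).real s := by
        simp_rw [measureReal_def, gaussianReal_apply_eq_integral m hv, gaussPdf_eq_gaussianPDFReal]
        exact (ENNReal.toReal_ofReal (integral_nonneg (gaussianPDFReal_nonneg _ _))).symm
    _ ≤ (gaussianReal m (‖σ‖₊ ^ 2)).real {z | r ≤ |z - m|} := measureReal_mono hs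
    _ ≤ 2 * exp (-r ^ 2 / (2 * σ ^ 2)) := by
        have hv2 : ((‖σ‖₊ ^ 2 : ℝ≥0) : ℝ) = σ ^ 2 := by simp
        have := gaussianReal_real_abs_sub_ge_le m (‖σ‖₊ ^ 2) hr
        rwa [hv2] at this

lemma abs_mul_exp_neg_sq_div_two_le (t : ℝ) : |t| * exp (-t ^ 2 / 2) ≤ exp (-1 / 2) := by
  have hamgm : |t| ≤ t ^ 2 / 2 - 1 / 2 + 1 := by nlinarith [sq_nonneg (|t| - 1), sq_abs t]
  calc |t| * exp (-t ^ 2 / 2) ≤ exp (t ^ 2 / 2 - 1 / 2) * exp (-t ^ 2 / 2) :=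
        mul_le_mul_of_nonneg_right (hamgm.trans (add_one_le_exp _)) (exp_pos _).le
    _ = exp (-1 / 2) := by rw [← exp_add]; ring_nf

lemma hasDerivAt_gaussPdf_mean (σ z m : ℝ) :
    HasDerivAt (gaussPdf σ z) (gaussPdf σ z m * ((z - m) / σ ^ 2)) m := by
  have hexponent : HasDerivAt (fun u ↦ -(z - u) ^ 2 / (2 * σ ^ 2)) ((z - m) / σ ^ 2) m := by
    refine (((hasDerivAt_id m).const_sub z).fun_pow 2).fun_neg.div_const (2 * σ ^ 2)
      |>.congr_deriv ?_
    rcases eq_or_ne σ 0 with rfl | hσ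
    · simp
    · simp only [id]; field_simp; ring
  exact (hexponent.exp.const_mul (√(2 * π * σ ^ 2))⁻¹).congr_deriv
    (by simp only [gaussPdf]; ring)

lemma abs_gaussPdf_mul_div_sq_le {σ : ℝ} (hσ : 0 < σ) (z m : ℝ) :
    |gaussPdf σ z m * ((z - m) / σ ^ 2)| ≤ exp (-1 / 2) / (σ * √(2 * π * σ ^ 2)) := by
  set t := (z - m) / σ
  have hσsqrt : 0 < σ * √(2 * π * σ ^ 2) := by positivity
  have h : gaussPdf σ z m * ((z - m) / σ ^ 2)
      = t * exp (-t ^ 2 / 2) / (σ * √(2 * π * σ ^ 2)) := by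
    simp only [gaussPdf, t, div_pow]
    field_simp
  rw [h, abs_div, abs_mul, abs_of_pos (exp_pos _), abs_of_pos hσsqrt]
  gcongr
  exact abs_mul_exp_neg_sq_div_two_le t

lemma abs_gaussPdf_sub_gaussPdf_le {σ : ℝ} (hσ : 0 < σ) (z a b : ℝ) :
    |gaussPdf σ z a - gaussPdf σ z b| ≤ exp (-1 / 2) / (σ * √(2 * π * σ ^ 2)) * |a - b| :=
  convex_univ.norm_image_sub_le_of_norm_hasDerivWithin_le
    (fun m _ ↦ (hasDerivAt_gaussPdf_mean σ z m).hasDerivWithinAt)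
    (fun m _ ↦ abs_gaussPdf_mul_div_sq_le hσ z m) (Set.mem_univ b) (Set.mem_univ a)

lemma setIntegral_closedBall_abs_gaussPdf_sub_le {σ : ℝ} (hσ : 0 < σ) (c a b : ℝ) {R : ℝ}
    (hR : 0 ≤ R) :
    ∫ z in Metric.closedBall c R, |gaussPdf σ z a - gaussPdf σ z b|
      ≤ 2 * R * |a - b| * exp (-1 / 2) / (σ * √(2 * π * σ ^ 2)) := calc
  _ ≤ ‖∫ z in Metric.closedBall c R, |gaussPdf σ z a - gaussPdf σ z b|‖ := le_norm_self _
  _ ≤ exp (-1 / 2) / (σ * √(2 * π * σ ^ 2)) * |a - b|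
        * volume.real (Metric.closedBall c R) :=
      norm_setIntegral_le_of_norm_le_const measure_closedBall_lt_top fun z _ ↦ by
        rw [norm_eq_abs, abs_abs]
        exact abs_gaussPdf_sub_gaussPdf_le hσ z a b
  _ = _ := by rw [Real.volume_real_closedBall hR]; ring

lemma setIntegral_compl_closedBall_abs_gaussPdf_sub_le {σ : ℝ} (hσ : 0 < σ) {w wh δ R : ℝ}
    (hww : |wh - w| ≤ δ) (hR : δ ≤ R) :
    ∫ z in (Metric.closedBall w R)ᶜ, |gaussPdf σ z wh - gaussPdf σ z w|
      ≤ 2 * exp (-(R - δ) ^ 2 / (2 * σ ^ 2)) + 2 * exp (-R ^ 2 / (2 * σ ^ 2)) := by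
  have houtside : ∀ z ∈ (Metric.closedBall w R)ᶜ, R < |z - w| := fun z hz ↦ by
    simpa [Real.dist_eq] using hz
  have htail_wh : (Metric.closedBall w R)ᶜ ⊆ {z | R - δ ≤ |z - wh|} := fun z hz ↦ by
    show R - δ ≤ |z - wh|
    linarith [houtside z hz, abs_sub_le z wh w]
  have hint_wh := (integrable_gaussPdf σ wh).integrableOn (s := (Metric.closedBall w R)ᶜ)
  have hint_w := (integrable_gaussPdf σ w).integrableOn (s := (Metric.closedBall w R)ᶜ)
  calc ∫ z in (Metric.closedBall w R)ᶜ, |gaussPdf σ z wh - gaussPdf σ z w|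
    _ ≤ ∫ z in (Metric.closedBall w R)ᶜ, (gaussPdf σ z wh + gaussPdf σ z w) :=
        setIntegral_mono (hint_wh.sub hint_w).abs (hint_wh.add hint_w) fun z ↦
          (abs_sub _ _).trans_eq <| by
            rw [abs_of_nonneg (gaussPdf_nonneg σ z wh), abs_of_nonneg (gaussPdf_nonneg σ z w)]
    _ = (∫ z in (Metric.closedBall w R)ᶜ, gaussPdf σ z wh)
          + ∫ z in (Metric.closedBall w R)ᶜ, gaussPdf σ z w := integral_add hint_wh hint_w
    _ ≤ _ := by
        gcongr
        · exact setIntegral_gaussPdf_le_of_subset hσ.ne' (sub_nonneg.2 hR) htail_wh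
        · exact setIntegral_gaussPdf_le_of_subset hσ.ne' ((abs_nonneg _).trans (hww.trans hR))
            fun z hz ↦ (houtside z hz).le

theorem gaussPdf_L1_mean_perturbation_general (σ : ℝ) (hσ : 0 < σ) (w wh δ R : ℝ)
    (hww : |wh - w| ≤ δ) (hR : δ ≤ R) :
    (∫ z : ℝ, |gaussPdf σ z wh - gaussPdf σ z w|) ≤
      2 * R * δ * Real.exp (-1 / 2) / (σ * Real.sqrt (2 * Real.pi * σ ^ 2))
        + 2 * Real.exp (-(R - δ) ^ 2 / (2 * σ ^ 2))
        + 2 * Real.exp (-R ^ 2 / (2 * σ ^ 2)) := by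
  have hR0 : 0 ≤ R := (abs_nonneg _).trans (hww.trans hR)
  have hint : Integrable fun z ↦ |gaussPdf σ z wh - gaussPdf σ z w| :=
    ((integrable_gaussPdf σ wh).sub (integrable_gaussPdf σ w)).abs
  have hcentral : ∫ z in Metric.closedBall w R, |gaussPdf σ z wh - gaussPdf σ z w|
      ≤ 2 * R * δ * exp (-1 / 2) / (σ * √(2 * π * σ ^ 2)) :=
    (setIntegral_closedBall_abs_gaussPdf_sub_le hσ w wh w hR0).trans (by gcongr)
  rw [← integral_add_compl (measurableSet_closedBall (x := w) (ε := R)) hint]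
  linarith [setIntegral_compl_closedBall_abs_gaussPdf_sub_le hσ hww hR]

/-- L¹ distance bound between two Gaussian densities whose means differ by at most `δ`:
for every `R ≥ δ`,
`∫ |p(z;wh) − p(z;w)| dz ≤ 2Rδ·e^{−1/2}/(σ√(2πσ²)) + 2exp(−(R−δ)²/(2σ²)) + 2exp(−R²/(2σ²))`. -/
theorem gaussPdf_L1_mean_perturbation (σ : ℝ) (hσ : 0 < σ) (w wh δ R : ℝ)
    (hδ : 0 ≤ δ) (hww : |wh - w| ≤ δ) (hR : δ ≤ R) :
    (∫ z : ℝ, |gaussPdf σ z wh - gaussPdf σ z w|) ≤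
      2 * R * δ * Real.exp (-1 / 2) / (σ * Real.sqrt (2 * Real.pi * σ ^ 2))
        + 2 * Real.exp (-(R - δ) ^ 2 / (2 * σ ^ 2))
        + 2 * Real.exp (-R ^ 2 / (2 * σ ^ 2)) :=
  gaussPdf_L1_mean_perturbation_general σ hσ w wh δ R hww hR
end
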